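/- For any B_x, B_w, B_y > 0 and any D_hid ≥ 2d + 10, there exists a masked attention layer with 2 heads such that the following holds: for any N and any input H ∈ ℝ^{D_hid×2N} with columns h_{2i−1} = [x_i; 0; w_i; p^x_i] and h_{2i} = [x_i; y_i; 0_d; p^y_i] (i ∈ [N]) satisfying ‖x_i‖₂ ≤ B_x, |y_i| ≤ B_y and ‖w_i‖₂ ≤ B_w for all i, the output Attn(H) has column 2i−1 equal to [x_i; ŷ_i; w_i; p^x_i] with ŷ_i = ⟨x_i, w_i⟩, for every i ∈ [N]. -/

import Mathlib

open scoped BigOperators Matrix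

noncomputable section

/-- The ReLU activation. -/
def relu (t : ℝ) : ℝ := max t 0

/-- Entrywise ReLU on vectors. -/
def reluV {n : ℕ} (v : Fin n → ℝ) : Fin n → ℝ := fun i => relu (v i)

/-- Leaky ReLU with slope `ρ`. -/
def lrelu (ρ t : ℝ) : ℝ := max t (ρ * t)

/-- Entrywise leaky ReLU. -/
def lreluV (ρ : ℝ) {n : ℕ} (v : Fin n → ℝ) : Fin n → ℝ := fun i => lrelu ρ (v i)

/-- Euclidean (ℓ2) norm of a vector in `ℝ^n`. -/
def l2norm {n : ℕ} (v : Fin n → ℝ) : ℝ := Real.sqrt (∑ i, (v i) ^ 2)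

/-- An attention head: (query, key, value) matrices. -/
structure AttnHead (Dhid : ℕ) where
  Q : Matrix (Fin Dhid) (Fin Dhid) ℝ
  K : Matrix (Fin Dhid) (Fin Dhid) ℝ
  V : Matrix (Fin Dhid) (Fin Dhid) ℝ

/-- Masked attention layer with the normalized-ReLU activation.  Tokens are the
columns `H i`, indexed 0-based (math index `i+1`), so the normalization is
`1/(i+1)` and keys range over `j ≤ i`. -/
def attnLayer {Dhid Mh : ℕ} (heads : Fin Mh → AttnHead Dhid) {M : ℕ}
    (H : Fin M → Fin Dhid → ℝ) : Fin M → Fin Dhid → ℝ := fun i =>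
  H i + ∑ m : Fin Mh, (1 / (((i : ℕ) : ℝ) + 1)) •
    ∑ j ∈ Finset.Iic i,
      relu (((heads m).Q *ᵥ H i) ⬝ᵥ ((heads m).K *ᵥ H j)) • ((heads m).V *ᵥ H j)

/-- MLP layer with residual connection. -/
def mlpLayer {Dhid : ℕ} (W1 W2 : Matrix (Fin Dhid) (Fin Dhid) ℝ) {M : ℕ}
    (H : Fin M → Fin Dhid → ℝ) : Fin M → Fin Dhid → ℝ := fun i =>
  H i + W2 *ᵥ reluV (W1 *ᵥ H i)

/-- One transformer block: a masked attention layer followed by an MLP layer. -/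
structure TFLayer (Dhid : ℕ) where
  Mh : ℕ
  heads : Fin Mh → AttnHead Dhid
  W1 : Matrix (Fin Dhid) (Fin Dhid) ℝ
  W2 : Matrix (Fin Dhid) (Fin Dhid) ℝ

/-- Apply one transformer block. -/
def TFLayer.apply {Dhid : ℕ} (l : TFLayer Dhid) {M : ℕ}
    (H : Fin M → Fin Dhid → ℝ) : Fin M → Fin Dhid → ℝ :=
  mlpLayer l.W1 l.W2 (attnLayer l.heads H)

/-- A decoder transformer: the composition of its blocks. -/
def tfApply {Dhid : ℕ} (layers : List (TFLayer Dhid)) {M : ℕ}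
    (H : Fin M → Fin Dhid → ℝ) : Fin M → Fin Dhid → ℝ :=
  layers.foldl (fun G l => TFLayer.apply l G) H

/-- The vector in `ℝ^Dhid` whose last `m` coordinates are given by `a` and whose
remaining coordinates vanish (zero padding). -/
def tailVec (Dhid : ℕ) {m : ℕ} (a : Fin m → ℝ) : Fin Dhid → ℝ := fun r =>
  if _ : Dhid ≤ (r : ℕ) + m then
    if h2 : (r : ℕ) + m - Dhid < m then a ⟨(r : ℕ) + m - Dhid, h2⟩ else 0
  else 0

/-- The positional encoding `p^x_i` (1-based math index `i`):
zero padding followed by `[1; 2i-1; (2i-1)²; (2i-1)³; i; i²; 1; i]`. -/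
def posXvec (Dhid : ℕ) (i : ℕ) : Fin Dhid → ℝ :=
  tailVec Dhid
    ![1, 2*(i:ℝ)-1, (2*(i:ℝ)-1)^2, (2*(i:ℝ)-1)^3, (i:ℝ), (i:ℝ)^2, 1, (i:ℝ)]

/-- The positional encoding `p^y_i`:
zero padding followed by `[1; 2i; (2i)²; (2i)³; i; i²; 0; 0]`. -/
def posYvec (Dhid : ℕ) (i : ℕ) : Fin Dhid → ℝ :=
  tailVec Dhid ![1, 2*(i:ℝ), (2*(i:ℝ))^2, (2*(i:ℝ))^3, (i:ℝ), (i:ℝ)^2, 0, 0]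

/-- Supervised token format with value block of width `D`: for 0-based example
index `i = t/2`, the x-token (even `t`) is `[zx i; 0; p^x_{i+1}]` and the
y-token (odd `t`) is `[zy i; y i; p^y_{i+1}]`. -/
def supFormat (Dhid D N : ℕ) (zx zy : ℕ → Fin D → ℝ) (y : ℕ → ℝ) :
    Fin (2*N) → Fin Dhid → ℝ := fun t r =>
  if h : (r : ℕ) < D then
    (if (t : ℕ) % 2 = 0 then zx ((t : ℕ)/2) ⟨(r : ℕ), h⟩ else zy ((t : ℕ)/2) ⟨(r : ℕ), h⟩)
  else if (r : ℕ) = D then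
    (if (t : ℕ) % 2 = 0 then 0 else y ((t : ℕ)/2))
  else if (t : ℕ) % 2 = 0 then posXvec Dhid ((t : ℕ)/2 + 1) r
  else posYvec Dhid ((t : ℕ)/2 + 1) r

/-- The supervised input format: `h_{2i-1} = [x_i; 0; p^x_i]`,
`h_{2i} = [0_d; y_i; p^y_i]`. -/
def supInput (Dhid d N : ℕ) (x : ℕ → Fin d → ℝ) (y : ℕ → ℝ) :
    Fin (2*N) → Fin Dhid → ℝ :=
  supFormat Dhid d N x (fun _ _ => 0) y

/-- The `(Bs.length + 1)`-layer leaky-ReLU MLP representation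
`Φ(v) = σ_ρ(B_L ⋯ σ_ρ(B_1 v) ⋯)`. -/
def mlpRep (ρ : ℝ) {din D : ℕ} (B1 : Matrix (Fin D) (Fin din) ℝ)
    (Bs : List (Matrix (Fin D) (Fin D) ℝ)) (v : Fin din → ℝ) : Fin D → ℝ :=
  Bs.foldl (fun u B => lreluV ρ (B *ᵥ u)) (lreluV ρ (B1 *ᵥ v))

/-- Ridge empirical risk over the first `n` samples
(equal to `λ/2 ‖w‖²` for `n = 0`, matching the convention `L̂_0 := 0`). -/
def ridgeLoss (lam : ℝ) {D : ℕ} (n : ℕ) (x : ℕ → Fin D → ℝ) (y : ℕ → ℝ)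
    (w : Fin D → ℝ) : ℝ :=
  (1/(2*(n:ℝ))) * ∑ j ∈ Finset.range n, (w ⬝ᵥ x j - y j)^2 + lam/2 * ∑ r, (w r)^2


/-- Token format for the in-context gradient-descent layers: the x-token
`2i-1` is `[x_i; yhat_i; w_i; p^x_i]` and the y-token `2i` is
`[x_i; y_i; 0_d; p^y_i]` (0-based `i = t/2`). -/
def gdFormat (Dhid d N : ℕ) (x : ℕ → Fin d → ℝ) (y yhat : ℕ → ℝ)
    (w : ℕ → Fin d → ℝ) : Fin (2*N) → Fin Dhid → ℝ := fun t r =>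
  if h : (r : ℕ) < d then x ((t : ℕ)/2) ⟨(r : ℕ), h⟩
  else if h1 : (r : ℕ) = d then
    (if (t : ℕ) % 2 = 0 then yhat ((t : ℕ)/2) else y ((t : ℕ)/2))
  else if h2 : (r : ℕ) < 2*d + 1 then
    (if (t : ℕ) % 2 = 0 then w ((t : ℕ)/2) ⟨(r : ℕ) - (d + 1), by omega⟩ else 0)
  else if (t : ℕ) % 2 = 0 then posXvec Dhid ((t : ℕ)/2 + 1) r
  else posYvec Dhid ((t : ℕ)/2 + 1) r

/-!
Head `s ∈ {1, -1}` scores key token `j` against the query token `t = 2i - 1` by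
`s ⟨x_i, w_j⟩ + M (j - t)` with `M = B_x B_w`, reading the constant `1` and the position `t` off
the positional encodings. By Cauchy–Schwarz every earlier key gets a nonpositive score, so after
the ReLU only `j = t` survives; its value `s t e_ŷ` cancels the normalisation `1/t`, and the two
heads together write `relu ⟨x_i, w_i⟩ - relu (-⟨x_i, w_i⟩) = ⟨x_i, w_i⟩` into the `ŷ` slot.
-/

theorem relu_sub_relu_neg (u : ℝ) : relu u - relu (-u) = u :=
  posPart_sub_negPart u

theorem relu_of_nonpos {u : ℝ} (h : u ≤ 0) : relu u = 0 :=
  max_eq_right h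

theorem abs_dotProduct_le_of_l2norm_le {n : ℕ} {u v : Fin n → ℝ} {a b : ℝ}
    (hu : l2norm u ≤ a) (hv : l2norm v ≤ b) : |u ⬝ᵥ v| ≤ a * b := by
  have hcs : |u ⬝ᵥ v| ≤ l2norm u * l2norm v := by
    rw [l2norm, l2norm, ← Real.sqrt_mul (by positivity), ← Real.sqrt_sq_eq_abs]
    exact Real.sqrt_le_sqrt (Finset.sum_mul_sq_le_sq_mul_sq _ _ _)
  exact hcs.trans (mul_le_mul hu hv (Real.sqrt_nonneg _) ((Real.sqrt_nonneg _).trans hu))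

theorem sum_Iic_relu_smul_eq_of_nonpos {M : ℕ} {E : Type*} [AddCommMonoid E] [Module ℝ E]
    (f : Fin M → ℝ) (v : Fin M → E) (t : Fin M) (hf : ∀ j < t, f j ≤ 0) :
    ∑ j ∈ Finset.Iic t, relu (f j) • v j = relu (f t) • v t := by
  refine Finset.sum_eq_single_of_mem t (Finset.mem_Iic.2 le_rfl) fun j hj hjt => ?_
  rw [relu_of_nonpos (hf j (lt_of_le_of_ne (Finset.mem_Iic.1 hj) hjt)), zero_smul]

theorem Fin.sum_ite_val_eq {D : ℕ} {β : Type*} [AddCommMonoid β] (k : ℕ) (hk : k < D)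
    (f : Fin D → β) :
    ∑ c : Fin D, (if (c : ℕ) = k then f c else 0) = f ⟨k, hk⟩ := by
  simp [← Fin.ext_iff (b := ⟨k, hk⟩)]

theorem Fin.sum_univ_eq_of_eq_zero_of_add_two_le {D d : ℕ} {β : Type*} [AddCommMonoid β]
    (hD : d + 2 ≤ D) (f : Fin D → β)
    (hf : ∀ r : Fin D, d + 2 ≤ (r : ℕ) → f r = 0) :
    ∑ r, f r = ∑ k : Fin d, f (Fin.castLE (by omega) k) + f ⟨d, by omega⟩
      + f ⟨d + 1, by omega⟩ := by
  set g : ℕ → β := fun k => if h : k < D then f ⟨k, h⟩ else 0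
  have hg : ∀ r : Fin D, f r = g r := fun r => by simp [g]
  simp only [hg, Fin.val_castLE]
  rw [Fin.sum_univ_eq_sum_range g, Fin.sum_univ_eq_sum_range g,
    ← Finset.sum_subset (Finset.range_subset_range.2 hD), Finset.sum_range_succ,
    Finset.sum_range_succ]
  intro k hk hkd
  simp only [Finset.mem_range, not_lt] at hk hkd
  simp [g, hk, hf ⟨k, hk⟩ hkd]

/-- Coordinates `Dhid - 8` and `Dhid - 7` of every token hold the constant `1` and its 1-based
position; the query and key matrices copy them into coordinates `d` and `d + 1`. -/
def predQuery (d Dhid : ℕ) (s : ℝ) : Matrix (Fin Dhid) (Fin Dhid) ℝ :=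
  Matrix.of fun r c =>
    if (r : ℕ) < d then (if (c : ℕ) = r then s else 0)
    else if (r : ℕ) = d then (if (c : ℕ) = Dhid - 7 then 1 else 0)
    else if (r : ℕ) = d + 1 then (if (c : ℕ) = Dhid - 8 then 1 else 0)
    else 0

def predKey (d Dhid : ℕ) (M : ℝ) : Matrix (Fin Dhid) (Fin Dhid) ℝ :=
  Matrix.of fun r c =>
    if (r : ℕ) < d then (if (c : ℕ) = d + 1 + r then 1 else 0)
    else if (r : ℕ) = d then (if (c : ℕ) = Dhid - 8 then -M else 0)
    else if (r : ℕ) = d + 1 then (if (c : ℕ) = Dhid - 7 then M else 0)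
    else 0

def predValue (d Dhid : ℕ) (s : ℝ) : Matrix (Fin Dhid) (Fin Dhid) ℝ :=
  Matrix.of fun r c => if (r : ℕ) = d ∧ (c : ℕ) = Dhid - 7 then s else 0

def predHeads (d Dhid : ℕ) (M : ℝ) : Fin 2 → AttnHead Dhid :=
  ![⟨predQuery d Dhid 1, predKey d Dhid M, predValue d Dhid 1⟩,
    ⟨predQuery d Dhid (-1), predKey d Dhid M, predValue d Dhid (-1)⟩]

section PredictionHeads

variable {d Dhid : ℕ} (hD : 2 * d + 10 ≤ Dhid)
include hD

theorem predQuery_mulVec_apply (s : ℝ) (h : Fin Dhid → ℝ) (r : Fin Dhid) :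
    (predQuery d Dhid s *ᵥ h) r =
      if (r : ℕ) < d then s * h r
      else if (r : ℕ) = d then h ⟨Dhid - 7, by omega⟩
      else if (r : ℕ) = d + 1 then h ⟨Dhid - 8, by omega⟩
      else 0 := by
  simp only [predQuery, Matrix.mulVec, dotProduct, Matrix.of_apply]
  split_ifs <;> simp only [ite_mul, one_mul, zero_mul, Finset.sum_const_zero] <;>
    rw [Fin.sum_ite_val_eq]

theorem predKey_mulVec_apply (M : ℝ) (h : Fin Dhid → ℝ) (r : Fin Dhid) :
    (predKey d Dhid M *ᵥ h) r =
      if hr : (r : ℕ) < d then h ⟨d + 1 + r, by omega⟩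
      else if (r : ℕ) = d then -M * h ⟨Dhid - 8, by omega⟩
      else if (r : ℕ) = d + 1 then M * h ⟨Dhid - 7, by omega⟩
      else 0 := by
  simp only [predKey, Matrix.mulVec, dotProduct, Matrix.of_apply]
  split_ifs <;> simp only [ite_mul, one_mul, zero_mul, neg_mul, Finset.sum_const_zero] <;>
    rw [Fin.sum_ite_val_eq]

theorem predValue_mulVec (s : ℝ) (h : Fin Dhid → ℝ) :
    predValue d Dhid s *ᵥ h = Pi.single ⟨d, by omega⟩ (s * h ⟨Dhid - 7, by omega⟩) := by
  ext r
  simp only [predValue, Matrix.mulVec, dotProduct, Matrix.of_apply, Pi.single_apply,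
    Fin.ext_iff, ite_and, ite_mul, zero_mul]
  split_ifs
  · rw [Fin.sum_ite_val_eq]
  · simp

theorem predQuery_mulVec_dotProduct_predKey_mulVec (s M : ℝ) (h h' : Fin Dhid → ℝ) :
    (predQuery d Dhid s *ᵥ h) ⬝ᵥ (predKey d Dhid M *ᵥ h')
      = s * ∑ k : Fin d, h (Fin.castLE (by omega) k) * h' ⟨d + 1 + k, by omega⟩
        + M * (h ⟨Dhid - 8, by omega⟩ * h' ⟨Dhid - 7, by omega⟩
          - h ⟨Dhid - 7, by omega⟩ * h' ⟨Dhid - 8, by omega⟩) := by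
  rw [dotProduct, Fin.sum_univ_eq_of_eq_zero_of_add_two_le (show d + 2 ≤ Dhid by omega)]
  · have hcoord : ∀ k : Fin d, (predQuery d Dhid s *ᵥ h) (Fin.castLE (by omega) k)
          * (predKey d Dhid M *ᵥ h') (Fin.castLE (by omega) k)
        = s * (h (Fin.castLE (by omega) k) * h' ⟨d + 1 + k, by omega⟩) := fun k => by
      rw [predQuery_mulVec_apply hD, predKey_mulVec_apply hD]
      simp only [Fin.val_castLE, k.is_lt, if_true, dif_pos]
      ring
    have hpos : (predQuery d Dhid s *ᵥ h) ⟨d, by omega⟩ * (predKey d Dhid M *ᵥ h') ⟨d, by omega⟩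
        = -M * (h ⟨Dhid - 7, by omega⟩ * h' ⟨Dhid - 8, by omega⟩) := by
      rw [predQuery_mulVec_apply hD, predKey_mulVec_apply hD]
      simp only [lt_irrefl, if_false, dif_neg, not_false_eq_true, if_true]
      ring
    have hone : (predQuery d Dhid s *ᵥ h) ⟨d + 1, by omega⟩
          * (predKey d Dhid M *ᵥ h') ⟨d + 1, by omega⟩
        = M * (h ⟨Dhid - 8, by omega⟩ * h' ⟨Dhid - 7, by omega⟩) := by
      rw [predQuery_mulVec_apply hD, predKey_mulVec_apply hD]
      simp only [show ¬ d + 1 < d by omega, show d + 1 ≠ d by omega, if_false, dif_neg,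
        not_false_eq_true, if_true]
      ring
    rw [Finset.sum_congr rfl fun k _ => hcoord k, hpos, hone, ← Finset.mul_sum]
    ring
  · intro r hr
    simp [predQuery_mulVec_apply hD, show ¬ (r : ℕ) < d by omega, show (r : ℕ) ≠ d by omega,
      show (r : ℕ) ≠ d + 1 by omega]

end PredictionHeads

theorem tailVec_apply {Dhid m : ℕ} (hm : m ≤ Dhid) (a : Fin m → ℝ) (k : Fin m) (r : Fin Dhid)
    (hr : (r : ℕ) = Dhid - m + k) : tailVec Dhid a r = a k := by
  simp only [tailVec, show Dhid ≤ r + m by omega, dite_true, show (r : ℕ) + m - Dhid = k by omega,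
    k.is_lt, Fin.eta]

section GdFormat

variable {d Dhid N : ℕ} {x w : ℕ → Fin d → ℝ} {y yhat : ℕ → ℝ}

theorem gdFormat_apply_castLE (t : Fin (2 * N)) (k : Fin d) (h : d ≤ Dhid) :
    gdFormat Dhid d N x y yhat w t (Fin.castLE h k) = x (t / 2) k :=
  dif_pos k.is_lt

variable (hD : 2 * d + 10 ≤ Dhid)
include hD

theorem gdFormat_apply_wBlock (t : Fin (2 * N)) (k : Fin d) :
    gdFormat Dhid d N x y yhat w t ⟨d + 1 + k, by omega⟩
      = (if (t : ℕ) % 2 = 0 then w (t / 2) else 0) k := by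
  simp only [gdFormat, show ¬ d + 1 + (k : ℕ) < d by omega, show d + 1 + (k : ℕ) ≠ d by omega,
    show d + 1 + (k : ℕ) < 2 * d + 1 by omega, show d + 1 + (k : ℕ) - (d + 1) = k by omega,
    dite_false, dite_true, Fin.eta]
  split_ifs <;> rfl

theorem gdFormat_apply_one (t : Fin (2 * N)) :
    gdFormat Dhid d N x y yhat w t ⟨Dhid - 8, by omega⟩ = 1 := by
  simp only [gdFormat, posXvec, posYvec, show ¬ Dhid - 8 < d by omega,
    show Dhid - 8 ≠ d by omega, show ¬ Dhid - 8 < 2 * d + 1 by omega, dite_false]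
  split_ifs <;> exact tailVec_apply (m := 8) (by omega) _ 0 _ rfl

theorem gdFormat_apply_pos (t : Fin (2 * N)) :
    gdFormat Dhid d N x y yhat w t ⟨Dhid - 7, by omega⟩ = (t : ℝ) + 1 := by
  simp only [gdFormat, posXvec, posYvec, show ¬ Dhid - 7 < d by omega,
    show Dhid - 7 ≠ d by omega, show ¬ Dhid - 7 < 2 * d + 1 by omega, dite_false]
  split_ifs with ht <;> rw [tailVec_apply (m := 8) (by omega) _ 1 _ (by simp; omega)]
  · have hk : ((t / 2 : ℕ) : ℝ) * 2 = t := by exact_mod_cast (by omega : (t : ℕ) / 2 * 2 = t)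
    simp only [Matrix.cons_val_one, Matrix.cons_val_zero, Nat.cast_add, Nat.cast_one]
    linarith
  · have hk : ((t / 2 : ℕ) : ℝ) * 2 + 1 = t := by
      exact_mod_cast (by omega : (t : ℕ) / 2 * 2 + 1 = t)
    simp only [Matrix.cons_val_one, Matrix.cons_val_zero, Nat.cast_add, Nat.cast_one]
    linarith

theorem gdFormat_add_yhat (c : ℕ → ℝ) (t : Fin (2 * N)) (ht : (t : ℕ) % 2 = 0) :
    gdFormat Dhid d N x y (fun j => yhat j + c j) w t
      = gdFormat Dhid d N x y yhat w t + Pi.single ⟨d, by omega⟩ (c (t / 2)) := by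
  ext r
  by_cases hr : (r : ℕ) = d
  · have hrd : r = ⟨d, by omega⟩ := Fin.ext hr
    simp [gdFormat, hrd, ht]
  · simp [gdFormat, hr, ht, Fin.ext_iff]

end GdFormat

section LinearPrediction

variable {d Dhid N : ℕ} {x w : ℕ → Fin d → ℝ} {y yhat : ℕ → ℝ} (hD : 2 * d + 10 ≤ Dhid)
include hD

theorem predScore_gdFormat (s M : ℝ) (t j : Fin (2 * N)) :
    (predQuery d Dhid s *ᵥ gdFormat Dhid d N x y yhat w t)
        ⬝ᵥ (predKey d Dhid M *ᵥ gdFormat Dhid d N x y yhat w j)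
      = s * (x (t / 2) ⬝ᵥ (if (j : ℕ) % 2 = 0 then w (j / 2) else 0))
        + M * ((j : ℝ) - t) := by
  rw [predQuery_mulVec_dotProduct_predKey_mulVec hD]
  simp only [gdFormat_apply_castLE, gdFormat_apply_wBlock hD, gdFormat_apply_one hD,
    gdFormat_apply_pos hD]
  rw [dotProduct]
  ring

theorem predHead_gdFormat (s M : ℝ) (hs : |s| ≤ 1) (t : Fin (2 * N)) (ht : (t : ℕ) % 2 = 0)
    (hM : ∀ j < N, |x (t / 2) ⬝ᵥ w j| ≤ M) :
    (1 / ((t : ℕ) + 1 : ℝ)) • ∑ j ∈ Finset.Iic t,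
        relu ((predQuery d Dhid s *ᵥ gdFormat Dhid d N x y yhat w t)
          ⬝ᵥ (predKey d Dhid M *ᵥ gdFormat Dhid d N x y yhat w j))
          • (predValue d Dhid s *ᵥ gdFormat Dhid d N x y yhat w j)
      = Pi.single ⟨d, by omega⟩ (s * relu (s * (x (t / 2) ⬝ᵥ w (t / 2)))) := by
  have hM0 : 0 ≤ M := (abs_nonneg _).trans (hM (t / 2) (by omega))
  have hblock : ∀ j : Fin (2 * N),
      |x (t / 2) ⬝ᵥ (if (j : ℕ) % 2 = 0 then w (j / 2) else 0)| ≤ M := by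
    intro j
    split_ifs
    · exact hM _ (by omega)
    · simpa using hM0
  rw [sum_Iic_relu_smul_eq_of_nonpos _ _ t fun j hj => ?_]
  · rw [predScore_gdFormat hD, predValue_mulVec hD, gdFormat_apply_pos hD, if_pos ht,
      ← Pi.single_smul', ← Pi.single_smul']
    congr 1
    simp only [sub_self, mul_zero, add_zero, smul_eq_mul]
    field_simp
  · have hjt : (j : ℝ) + 1 ≤ t := by exact_mod_cast (hj : (j : ℕ) < t)
    have hsa : s * (x (t / 2) ⬝ᵥ (if (j : ℕ) % 2 = 0 then w (j / 2) else 0)) ≤ M :=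
      calc _ ≤ |s| * |x (t / 2) ⬝ᵥ (if (j : ℕ) % 2 = 0 then w (j / 2) else 0)| :=
            (le_abs_self _).trans (abs_mul _ _).le
        _ ≤ 1 * M := mul_le_mul hs (hblock j) (abs_nonneg _) zero_le_one
        _ = M := one_mul M
    rw [predScore_gdFormat hD]
    nlinarith

theorem attnLayer_predHeads_gdFormat (M : ℝ) (t : Fin (2 * N)) (ht : (t : ℕ) % 2 = 0)
    (hM : ∀ j < N, |x (t / 2) ⬝ᵥ w j| ≤ M) :
    attnLayer (predHeads d Dhid M) (gdFormat Dhid d N x y yhat w) t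
      = gdFormat Dhid d N x y (fun j => yhat j + x j ⬝ᵥ w j) w t := by
  simp only [attnLayer, Fin.sum_univ_two, predHeads, Matrix.cons_val_zero, Matrix.cons_val_one]
  rw [predHead_gdFormat hD 1 M (by norm_num) t ht hM,
    predHead_gdFormat hD (-1) M (by norm_num) t ht hM, gdFormat_add_yhat hD _ t ht,
    ← Pi.single_add]
  congr 2
  simpa [sub_eq_add_neg] using relu_sub_relu_neg (x (t / 2) ⬝ᵥ w (t / 2))

end LinearPrediction

/-- **Linear prediction layer (Lemma `linear-prediction`).**
For any `B_x, B_w, B_y > 0` and `D_hid ≥ 2d + 10` there is a 2-head masked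
attention layer such that on any input with columns
`h_{2i-1} = [x_i; 0; w_i; p^x_i]`, `h_{2i} = [x_i; y_i; 0_d; p^y_i]` with
`‖x_i‖₂ ≤ B_x`, `|y_i| ≤ B_y`, `‖w_i‖₂ ≤ B_w`, the output has columns
`2i-1` equal to `[x_i; ŷ_i; w_i; p^x_i]` with `ŷ_i = ⟨x_i, w_i⟩`. -/
theorem linear_prediction_layer (d Dhid : ℕ) (Bx Bw By : ℝ)
    (hDhid : 2*d + 10 ≤ Dhid) :
    ∃ heads : Fin 2 → AttnHead Dhid,
      ∀ (N : ℕ) (x w : ℕ → Fin d → ℝ) (y : ℕ → ℝ),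
        (∀ i < N, l2norm (x i) ≤ Bx) →
        (∀ i < N, |y i| ≤ By) →
        (∀ i < N, l2norm (w i) ≤ Bw) →
        ∀ i : Fin N, ∀ r : Fin Dhid,
          attnLayer heads (gdFormat Dhid d N x y (fun _ => 0) w)
              ⟨2*(i : ℕ), by have := i.2; omega⟩ r
            = gdFormat Dhid d N x y (fun j => x j ⬝ᵥ w j) w
              ⟨2*(i : ℕ), by have := i.2; omega⟩ r := by
  refine ⟨predHeads d Dhid (Bx * Bw), fun N x w y hx _ hw i r => ?_⟩
  have hlayer := attnLayer_predHeads_gdFormat (y := y) (yhat := fun _ => 0) hDhid (Bx * Bw)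
    ⟨2 * i, by omega⟩ (by simp) fun j hj =>
      abs_dotProduct_le_of_l2norm_le (hx _ (by omega)) (hw j hj)
  simpa only [zero_add] using congrFun hlayer r

end
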